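/- Let K be a finite simplicial complex and L a non-contractible compact metric ANR. If X and Y are compact (Hausdorff) spaces and dim X = 0 (Lebesgue covering dimension), then: (a) K-Ind (X × Y) = K-Ind Y; (b) K-str (X × Y) = K-str Y; (c) L-Ind (X × Y) = L-Ind Y. -/

import Mathlib

open Set Topology Cardinal

noncomputable section

attribute [local instance] Classical.propDecidable

/-- Values of dimension functions: `⊥ : WithBot Ordinal.{0}` encodes `−1`,
ordinals are the usual values, and `⊤` encodes `∞`. -/
abbrev Dim : Type 1 := WithTop (WithBot Ordinal.{0})

/-- An ordinal viewed as a dimension value. -/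
def Dim.ofOrdinal (a : Ordinal.{0}) : Dim := ((a : WithBot Ordinal.{0}) : Dim)

/-- The dimension value `−1`. -/
def Dim.minusOne : Dim := ((⊥ : WithBot Ordinal.{0}) : Dim)

/-- An integer `m ≥ −1` viewed as a dimension value. -/
def Dim.ofInt (m : ℤ) : Dim := if 0 ≤ m then Dim.ofOrdinal m.toNat else Dim.minusOne

/-- `A` is a `K`-tuple for the simplicial complex `K` on the vertex set `Fin m`:
whenever the members indexed by a nonempty `I` have a common point, `I` spans a
simplex of `K`. -/
def IsKTuple {m : ℕ} (K : Finset (Fin m) → Prop) {X : Type} (A : Fin m → Set X) : Prop :=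
  ∀ I : Finset (Fin m), I.Nonempty → (⋂ i ∈ I, A i).Nonempty → K I

/-- `K` is an abstract (finite) simplicial complex with vertex set `Fin m`:
it is closed under passing to nonempty subsets, and contains every vertex. -/
def IsComplex {m : ℕ} (K : Finset (Fin m) → Prop) : Prop :=
  (∀ s t : Finset (Fin m), s ⊆ t → s.Nonempty → K t → K s) ∧ ∀ i, K {i}

/-- The boundary complex `∂Δ^k` of the `k`-simplex: all proper subsets of the
`k+1` vertices span simplices. -/
def bComplex (k : ℕ) : Finset (Fin (k + 1)) → Prop := fun s => s ≠ Finset.univ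

/-- `U` is an (open) `K`-neighbourhood of the tuple `F`. -/
def KNbhd {m : ℕ} (K : Finset (Fin m) → Prop) {X : Type} [TopologicalSpace X]
    (F U : Fin m → Set X) : Prop :=
  (∀ i, IsOpen (U i)) ∧ IsKTuple K U ∧ ∀ i, F i ⊆ U i

/-- Auxiliary form of `K-Ind X ≤ α`, defined by transfinite recursion on `α`:
every closed `K`-tuple has a `K`-neighbourhood whose corresponding `K`-partition
is either empty (dimension `−1`) or has `K-Ind < α`. -/
def KIndLeAux {m : ℕ} (K : Finset (Fin m) → Prop) :
    Ordinal.{0} → ∀ X : Type, TopologicalSpace X → Prop :=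
  (wellFounded_lt (α := Ordinal.{0})).fix fun α rec X tX =>
    letI := tX
    ∀ F : Fin m → Set X, (∀ i, IsClosed (F i)) → IsKTuple K F →
      ∃ U : Fin m → Set X, (∀ i, IsOpen (U i)) ∧ IsKTuple K U ∧ (∀ i, F i ⊆ U i) ∧
        ((⋃ i, U i)ᶜ = (∅ : Set X) ∨
          ∃ β : Set.Iio α, rec β.1 β.2 (↥((⋃ i, U i)ᶜ)) inferInstance)

/-- `K-Ind X ≤ α` (for an ordinal `α ≥ 0`). -/
def KIndLE {m : ℕ} (K : Finset (Fin m) → Prop) (X : Type) [tX : TopologicalSpace X]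
    (α : Ordinal.{0}) : Prop :=
  KIndLeAux K α X tX

/-- Fedorchuk's inductive dimension `K-Ind` modulo a simplicial complex `K`;
`−1` for the empty space, the least `α` with `K-Ind X ≤ α` otherwise, `∞` if none. -/
def KInd {m : ℕ} (K : Finset (Fin m) → Prop) (X : Type) [TopologicalSpace X] : Dim :=
  if IsEmpty X then Dim.minusOne
  else if ∃ α, KIndLE K X α then Dim.ofOrdinal (sInf {α | KIndLE K X α}) else ⊤

/-- The set of `K`-obstruction points of an open `K`-tuple `U`: points covered
by no `K`-neighbourhood of `U`. -/
def KObs {m : ℕ} (K : Finset (Fin m) → Prop) {X : Type} [TopologicalSpace X]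
    (U : Fin m → Set X) : Set X :=
  {x | ¬ ∃ V : Fin m → Set X, KNbhd K U V ∧ x ∈ ⋃ i, V i}

/-- `X` is strongly `α`-dimensional: `K-Ind X` is a positive ordinal `α` and some
closed `K`-tuple admits no `K`-neighbourhood `U` without obstruction points whose
corresponding `K`-partition has `K-Ind < α`. -/
def KStrongly {m : ℕ} (K : Finset (Fin m) → Prop) (X : Type) [TopologicalSpace X] : Prop :=
  (∃ α : Ordinal.{0}, 0 < α ∧ KInd K X = Dim.ofOrdinal α) ∧
  ∃ F : Fin m → Set X, (∀ i, IsClosed (F i)) ∧ IsKTuple K F ∧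
    ∀ U : Fin m → Set X, KNbhd K F U →
      KInd K (↥((⋃ i, U i)ᶜ)) < KInd K X → KObs K U ≠ ∅

/-- The dimensional strength degree `K-str X ∈ {0,1}`. -/
def KStr {m : ℕ} (K : Finset (Fin m) → Prop) (X : Type) [TopologicalSpace X] : ℕ :=
  if KStrongly K X then 1 else 0

/-- `K-dim X ≤ n`: any `n+1` closed `K`-tuples admit `K`-partitions with empty
intersection. -/
def KDimLE {m : ℕ} (K : Finset (Fin m) → Prop) (X : Type) [TopologicalSpace X] (n : ℕ) : Prop :=
  ∀ F : Fin (n + 1) → Fin m → Set X,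
    (∀ j i, IsClosed (F j i)) → (∀ j, IsKTuple K (F j)) →
    ∃ U : Fin (n + 1) → Fin m → Set X, (∀ j, KNbhd K (F j) (U j)) ∧
      (⋂ j, (⋃ i, U j i)ᶜ) = (∅ : Set X)

/-- Fedorchuk's dimension `K-dim` modulo a simplicial complex `K`. -/
def KDim {m : ℕ} (K : Finset (Fin m) → Prop) (X : Type) [TopologicalSpace X] : Dim :=
  if IsEmpty X then Dim.minusOne
  else if ∃ n, KDimLE K X n then Dim.ofOrdinal ((sInf {n | KDimLE K X n} : ℕ) : Ordinal.{0}) else ⊤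

/-- `dim X ≤ n` for the Lebesgue covering dimension: every finite open cover has
an open shrinking of order at most `n+1`. -/
def CovDimLE (X : Type) [TopologicalSpace X] (n : ℕ) : Prop :=
  ∀ (ι : Type), Finite ι → ∀ U : ι → Set X, (∀ i, IsOpen (U i)) → (⋃ i, U i) = Set.univ →
    ∃ V : ι → Set X, (∀ i, IsOpen (V i)) ∧ (∀ i, V i ⊆ U i) ∧ (⋃ i, V i) = Set.univ ∧
      ∀ x : X, ({i | x ∈ V i}).ncard ≤ n + 1

/-- The Lebesgue covering dimension. -/
def covDim (X : Type) [TopologicalSpace X] : Dim :=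
  if IsEmpty X then Dim.minusOne
  else if ∃ n, CovDimLE X n then Dim.ofOrdinal ((sInf {n | CovDimLE X n} : ℕ) : Ordinal.{0}) else ⊤

/-- `Ind X ≤ n` for the large inductive dimension, by recursion on `n`. -/
def IndLE : ℕ → ∀ X : Type, TopologicalSpace X → Prop
  | 0, X, tX =>
    letI := tX
    ∀ F U : Set X, IsClosed F → IsOpen U → F ⊆ U →
      ∃ V : Set X, IsOpen V ∧ F ⊆ V ∧ V ⊆ U ∧ frontier V = ∅
  | n + 1, X, tX =>
    letI := tX
    ∀ F U : Set X, IsClosed F → IsOpen U → F ⊆ U →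
      ∃ V : Set X, IsOpen V ∧ F ⊆ V ∧ V ⊆ U ∧ IndLE n (↥(frontier V)) inferInstance

/-- The large inductive dimension `Ind`. -/
def IndDim (X : Type) [tX : TopologicalSpace X] : Dim :=
  if IsEmpty X then Dim.minusOne
  else if ∃ n, IndLE n X tX then Dim.ofOrdinal ((sInf {n | IndLE n X tX} : ℕ) : Ordinal.{0}) else ⊤

/-- The relation generating the topological join `A ∗ B`: the copy of `B` is
collapsed at parameter `0`, the copy of `A` at parameter `1`. -/
def JoinRel (A B : Type) : (A × B × unitInterval) → (A × B × unitInterval) → Prop :=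
  fun p q => (p.2.2 = 0 ∧ q.2.2 = 0 ∧ p.1 = q.1) ∨ (p.2.2 = 1 ∧ q.2.2 = 1 ∧ p.2.1 = q.2.1)

/-- The topological join `A ∗ B`. -/
abbrev Join (A B : Type) [TopologicalSpace A] [TopologicalSpace B] : Type :=
  Quot (JoinRel A B)

/-- Auxiliary construction of the join of `n+1` copies of `L`, bundled with its
topology. -/
def JoinPowAux (L : Type) (tL : TopologicalSpace L) : ℕ → (T : Type) × TopologicalSpace T
  | 0 => ⟨L, tL⟩
  | n + 1 =>
    let p := JoinPowAux L tL n
    letI := tL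
    letI := p.2
    ⟨Join L p.1, inferInstance⟩

/-- The join `L ∗ ⋯ ∗ L` of `n+1` copies of `L`. -/
def JoinPow (L : Type) [tL : TopologicalSpace L] (n : ℕ) : Type :=
  (JoinPowAux L tL n).1

instance joinPowTopologicalSpace (L : Type) [tL : TopologicalSpace L] (n : ℕ) :
    TopologicalSpace (JoinPow L n) :=
  (JoinPowAux L tL n).2

/-- `L-dim X ≤ n`: every continuous map from a closed subset of `X` to the join
of `n+1` copies of `L` extends continuously over `X`. -/
def LDimLE (L : Type) [TopologicalSpace L] (X : Type) [TopologicalSpace X] (n : ℕ) : Prop :=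
  ∀ F : Set X, IsClosed F → ∀ f : C(F, JoinPow L n),
    ∃ g : C(X, JoinPow L n), ∀ x : F, g x = f x

/-- Fedorchuk's dimension `L-dim` modulo an ANR `L`. -/
def LDim (L : Type) [TopologicalSpace L] (X : Type) [TopologicalSpace X] : Dim :=
  if IsEmpty X then Dim.minusOne
  else if ∃ n, LDimLE L X n then Dim.ofOrdinal ((sInf {n | LDimLE L X n} : ℕ) : Ordinal.{0}) else ⊤

/-- Auxiliary form of `L-Ind X ≤ α`, by transfinite recursion on `α`: every map
to `L` from a closed subset of `X` has an `L`-partition which is either empty or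
has `L-Ind < α`. -/
def LIndLeAux (L : Type) [TopologicalSpace L] :
    Ordinal.{0} → ∀ X : Type, TopologicalSpace X → Prop :=
  (wellFounded_lt (α := Ordinal.{0})).fix fun α rec X tX =>
    letI := tX
    ∀ F : Set X, IsClosed F → ∀ f : C(F, L),
      ∃ U : Set X, IsOpen U ∧ ∃ hFU : F ⊆ U,
        (∃ g : C(U, L), ∀ (x : X) (hx : x ∈ F), g ⟨x, hFU hx⟩ = f ⟨x, hx⟩) ∧
        (Uᶜ = (∅ : Set X) ∨ ∃ β : Set.Iio α, rec β.1 β.2 (↥(Uᶜ)) inferInstance)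

/-- `L-Ind X ≤ α` (for an ordinal `α ≥ 0`). -/
def LIndLE (L : Type) [TopologicalSpace L] (X : Type) [tX : TopologicalSpace X]
    (α : Ordinal.{0}) : Prop :=
  LIndLeAux L α X tX

/-- Fedorchuk's inductive dimension `L-Ind` modulo an ANR `L`. -/
def LInd (L : Type) [TopologicalSpace L] (X : Type) [TopologicalSpace X] : Dim :=
  if IsEmpty X then Dim.minusOne
  else if ∃ α, LIndLE L X α then Dim.ofOrdinal (sInf {α | LIndLE L X α}) else ⊤

/-- `L` is an absolute neighbourhood retract (for metric spaces): `L` is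
metrizable and whenever a closed subset `A` of a metric space is homeomorphic to
`L` via `e`, the map `e` extends continuously over a neighbourhood of `A`. -/
def IsANR (L : Type) [TopologicalSpace L] : Prop :=
  TopologicalSpace.MetrizableSpace L ∧
  ∀ (M : Type) [MetricSpace M], ∀ A : Set M, IsClosed A → ∀ e : A ≃ₜ L,
    ∃ U : Set M, IsOpen U ∧ ∃ hAU : A ⊆ U, ∃ r : C(U, L),
      ∀ (a : M) (ha : a ∈ A), r ⟨a, hAU ha⟩ = e ⟨a, ha⟩

/-- `L-Ind_{b+} X`: the least dimension value `d` such that some open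
neighbourhood of `b` has closure of `L-Ind` at most `d`. -/
def LIndPlus (L : Type) [TopologicalSpace L] {X : Type} [TopologicalSpace X] (b : X) : Dim :=
  sInf {d : Dim | ∃ U : Set X, IsOpen U ∧ b ∈ U ∧ LInd L (↥(closure U)) ≤ d}

/-- The set `K(X) = {b ∈ X : L-Ind_{b+} X = L-Ind X}`. -/
def LKset (L : Type) [TopologicalSpace L] (X : Type) [TopologicalSpace X] : Set X :=
  {b | LIndPlus L b = LInd L X}

/-- The weight of a topological space: the least cardinality of a basis. -/
def tWeight (X : Type) [TopologicalSpace X] : Cardinal :=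
  sInf {c | ∃ B : Set (Set X), TopologicalSpace.IsTopologicalBasis B ∧ #B = c}

/-- The family `𝒮_X` of all subsets of `X` that are finite or homeomorphic to the
one-point compactification `A_{ℵ₀}` of a countably infinite discrete space. -/
def SFam (X : Type) [TopologicalSpace X] : Set (Set X) :=
  {S | S.Finite ∨ Nonempty (↥S ≃ₜ OnePoint ℕ)}

/-- The relation generating the quotient `N` in the `Z(X,Y)` construction:
each set `{μ} × {x} × Y` is collapsed to a point. -/
def ZRel (ι X Y : Type) : (OnePoint ι × X × Y) → (OnePoint ι × X × Y) → Prop :=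
  fun p q => p.1 = OnePoint.infty ∧ q.1 = OnePoint.infty ∧ p.2.1 = q.2.1

/-- The quotient space `N` of `A_𝔪 × X × Y`. -/
abbrev ZQuot (ι X Y : Type) [TopologicalSpace ι] [TopologicalSpace X] [TopologicalSpace Y] :
    Type :=
  Quot (ZRel ι X Y)

/-- The subset `Z(X,Y) = ⋃_{α ∈ A_𝔪} H(α)` of `N`:  `H(μ) = π₁({μ} × X × Y)` and
`H(α) = π₁({α} × φ(α) × Y)` for `α ≠ μ`. -/
def ZSet (ι X Y : Type) [TopologicalSpace ι] [TopologicalSpace X] [TopologicalSpace Y]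
    (φ : ι → Set X) : Set (ZQuot ι X Y) :=
  {z | ∃ p : OnePoint ι × X × Y, Quot.mk (ZRel ι X Y) p = z ∧
        (p.1 = OnePoint.infty ∨ ∃ i : ι, p.1 = (i : OnePoint ι) ∧ p.2.1 ∈ φ i)}

/-- The space `Z(X,Y)` (for the data `ι`, `φ`), with the subspace topology. -/
abbrev ZSpace (ι X Y : Type) [TopologicalSpace ι] [TopologicalSpace X] [TopologicalSpace Y]
    (φ : ι → Set X) : Type :=
  ↥(ZSet ι X Y φ)

/-- The subset `H(μ)` of `Z(X,Y)`. -/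
def ZHmu (ι X Y : Type) [TopologicalSpace ι] [TopologicalSpace X] [TopologicalSpace Y]
    (φ : ι → Set X) : Set (ZSpace ι X Y φ) :=
  {z | ∃ (x : X) (y : Y), (z : ZQuot ι X Y) = Quot.mk (ZRel ι X Y) (OnePoint.infty, x, y)}

/-- The projection `π_X : N → X`, `π₁(α,x,y) ↦ x`. -/
def ZQuotProjX {ι X Y : Type} [TopologicalSpace ι] [TopologicalSpace X] [TopologicalSpace Y] :
    ZQuot ι X Y → X :=
  Quot.lift (fun p => p.2.1) (fun _ _ h => h.2.2)

/-- The projection `π_X : Z(X,Y) → X`. -/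
def ZProjX {ι X Y : Type} [TopologicalSpace ι] [TopologicalSpace X] [TopologicalSpace Y]
    (φ : ι → Set X) : ZSpace ι X Y φ → X :=
  fun z => ZQuotProjX (z : ZQuot ι X Y)

/-- The cardinality requirements on the index set `ι` (of cardinality `𝔪`) in the
`Z(X,Y)` construction: `𝔪 ≥ max {ℵ₀, (wX)⁺, (wY)⁺, card 𝒮_X}`. -/
def ZCardOK (X Y ι : Type) [TopologicalSpace X] [TopologicalSpace Y] : Prop :=
  ℵ₀ ≤ #ι ∧ tWeight X < #ι ∧ tWeight Y < #ι ∧ #(SFam X) ≤ #ι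

/-- The requirements on `φ : A_𝔪 \ {μ} → 𝒮_X`: it takes values in `𝒮_X` and every
fibre has cardinality `𝔪`. -/
def ZPhiOK {X ι : Type} [TopologicalSpace X] (φ : ι → Set X) : Prop :=
  (∀ i, φ i ∈ SFam X) ∧ ∀ S ∈ SFam X, #(↥(φ ⁻¹' {S})) = #ι


/-!
Both `K-Ind` and `L-Ind` are transfinite inductive dimensions of one shape: `Ind Z ≤ α` iff every
separation problem on `Z` (a closed `K`-tuple, resp. a map from a closed set to `L`) has an
admissible open neighbourhood whose complement, the partition, has `Ind < α`. For any such
dimension, closed subspaces have no larger dimension, and a space cut by a locally constant map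
into finitely many clopen pieces has the dimension of its largest piece.

Given a problem on `X × Y`, solve the slice problem over each `x ∈ X` in `Y`. As `Y` is compact,
the solution still works over a neighbourhood of `x`; for `L` this needs a correction of the
extension through a neighbourhood retraction of `L` in `ℕ → ℝ`. As `dim X = 0`, these
neighbourhoods are refined by a finite clopen partition of `X`, so the partition obtained in
`X × Y` is a finite clopen union of closed pieces of products `X × P` with `P` a partition of
`Y`, and transfinite induction gives `Ind (X × Y) ≤ Ind Y`. The reverse inequality holds as `Y`
is a closed slice of `X × Y`. For `K-str`, the same gluing turns obstruction-free
`K`-neighbourhoods of the slices into one of the product, and conversely a slice of an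
obstruction-free neighbourhood is obstruction-free.
-/

theorem Dim.cases (d : Dim) : d = ⊤ ∨ d = Dim.minusOne ∨ ∃ α, d = Dim.ofOrdinal α := by
  rcases d with _ | _ | α
  · exact Or.inl rfl
  · exact Or.inr (Or.inl rfl)
  · exact Or.inr (Or.inr ⟨α, rfl⟩)

theorem Dim.ofOrdinal_le_ofOrdinal {α β : Ordinal.{0}} :
    Dim.ofOrdinal α ≤ Dim.ofOrdinal β ↔ α ≤ β := by
  simp [Dim.ofOrdinal]

theorem Dim.ofOrdinal_lt_ofOrdinal {α β : Ordinal.{0}} :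
    Dim.ofOrdinal α < Dim.ofOrdinal β ↔ α < β := by
  simp [Dim.ofOrdinal]

theorem Dim.minusOne_lt_ofOrdinal (α : Ordinal.{0}) : Dim.minusOne < Dim.ofOrdinal α :=
  WithTop.coe_lt_coe.2 (WithBot.bot_lt_coe α)

/-- The dimension function of the predicates `D Z α` ("`Z` has dimension `≤ α`"):
`KInd K = dimOf (KIndLE K)` and `LInd L = dimOf (LIndLE L)`. -/
def dimOf (D : ∀ (Z : Type) [TopologicalSpace Z], Ordinal.{0} → Prop)
    (Z : Type) [TopologicalSpace Z] : Dim :=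
  if IsEmpty Z then Dim.minusOne else if ∃ α, D Z α then Dim.ofOrdinal (sInf {α | D Z α}) else ⊤

theorem isClosedEmbedding_prodMk_left {X Y : Type} [TopologicalSpace X] [TopologicalSpace Y]
    [T1Space X] (x : X) : IsClosedEmbedding (Prod.mk x : Y → X × Y) :=
  .of_continuous_injective_isClosedMap (.prodMk_right x) (Prod.mk_right_injective x)
    (isClosedMap_prodMk_left x)

theorem isOpen_setOf_forall_prodMk_mem {X Y : Type} [TopologicalSpace X] [TopologicalSpace Y]
    [CompactSpace Y] {S : Set (X × Y)} (hS : IsOpen S) : IsOpen {x | ∀ y, (x, y) ∈ S} := by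
  have : {x | ∀ y, (x, y) ∈ S} = (Prod.fst '' Sᶜ)ᶜ := by ext x; simp
  exact this ▸ (isClosedMap_fst_of_compactSpace _ hS.isClosed_compl).isOpen_compl

theorem CovDimLE.exists_isLocallyConstant {X : Type} [TopologicalSpace X] [CompactSpace X]
    (hX : CovDimLE X 0) {O : X → Set X} (hO : ∀ x, IsOpen (O x)) (hxO : ∀ x, x ∈ O x) :
    ∃ (t : Finset X) (ρ : X → t), IsLocallyConstant ρ ∧ ∀ x, x ∈ O (ρ x) := by
  obtain ⟨t, ht⟩ := isCompact_univ.elim_finite_subcover O hO fun x _ => mem_iUnion.2 ⟨x, hxO x⟩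
  obtain ⟨V, hVo, hVO, hVcov, hVord⟩ := hX t (Finite.of_fintype _) (fun c => O c) (fun c => hO c)
    (eq_univ_of_univ_subset fun x hx => by simpa using ht hx)
  choose ρ hρ using fun x => mem_iUnion.1 (hVcov ▸ mem_univ x)
  -- a cover of order `≤ 1` is a partition, so its members are the fibres of `ρ`
  have hfib : ∀ c, ρ ⁻¹' {c} = V c := fun c =>
    ext fun x => ⟨fun h => h ▸ hρ x,
      fun hc => (ncard_le_one_iff (toFinite _)).1 (hVord x) (hρ x) hc⟩
  exact ⟨t, ρ, IsLocallyConstant.iff_isOpen_fiber.2 fun c => hfib c ▸ hVo c,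
    fun x => hVO _ (hρ x)⟩

theorem IsLocallyConstant.isOpen_setOf_snd_mem {X Y ι : Type} [TopologicalSpace X]
    [TopologicalSpace Y] {ρ : X → ι} (hρ : IsLocallyConstant ρ) {W : ι → Set Y}
    (hW : ∀ c, IsOpen (W c)) : IsOpen {z : X × Y | z.2 ∈ W (ρ z.1)} := by
  refine isOpen_iff_mem_nhds.2 fun z hz => Filter.mem_of_superset
    (prod_mem_nhds ((hρ.isOpen_fiber (ρ z.1)).mem_nhds rfl) ((hW _).mem_nhds hz)) ?_
  rintro ⟨x, y⟩ ⟨hx, hy⟩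
  simpa [show ρ x = ρ z.1 from hx] using hy

theorem mem_iUnion_image_val_fiber {Z ι : Type} {ρ : Z → ι} {V : ∀ j, Set ↥(ρ ⁻¹' {j})}
    {z : Z} {j : ι} (hz : ρ z = j) :
    z ∈ ⋃ j, ((↑) '' V j : Set Z) ↔ (⟨z, hz⟩ : ↥(ρ ⁻¹' {j})) ∈ V j := by
  subst hz
  simp only [mem_iUnion, mem_image]
  constructor
  · rintro ⟨j, ⟨w, hw⟩, hwV, rfl⟩
    obtain rfl : ρ w = j := hw
    exact hwV
  · exact fun h => ⟨ρ z, ⟨z, rfl⟩, h, rfl⟩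

theorem IsLocallyConstant.exists_continuousMap_eq {Z ι L : Type} [TopologicalSpace Z]
    [TopologicalSpace L] {τ : Z → ι} (hτ : IsLocallyConstant τ)
    (k : ∀ j, C(↥(τ ⁻¹' {j}), L)) : ∃ g : C(Z, L), ∀ z, g z = k (τ z) ⟨z, rfl⟩ := by
  refine ⟨ContinuousMap.liftCover (fun j => τ ⁻¹' {j}) k ?_
    fun z => ⟨τ z, (hτ.isOpen_fiber _).mem_nhds rfl⟩,
    fun z => ContinuousMap.liftCover_coe (i := τ z) ⟨z, rfl⟩⟩
  intro i j z hi hj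
  obtain rfl : τ z = i := hi
  obtain rfl : τ z = j := hj
  rfl

section dimOf

variable {D : ∀ (Z : Type) [TopologicalSpace Z], Ordinal.{0} → Prop}
  {Z : Type} [TopologicalSpace Z]

theorem dimOf_le_minusOne_iff : dimOf D Z ≤ Dim.minusOne ↔ IsEmpty Z := by
  unfold dimOf
  split_ifs with hZ hD
  · simp [hZ]
  · simp [hZ, Dim.minusOne, Dim.ofOrdinal]
  · simp [hZ, Dim.minusOne]

theorem dimOf_lt_ofOrdinal_iff {α : Ordinal.{0}} :
    dimOf D Z < Dim.ofOrdinal α ↔ IsEmpty Z ∨ ∃ β < α, D Z β := by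
  unfold dimOf
  split_ifs with hZ hD
  · simp [hZ, Dim.minusOne_lt_ofOrdinal]
  · simp only [hZ, Dim.ofOrdinal_lt_ofOrdinal, false_or]
    exact ⟨fun h => ⟨_, h, csInf_mem hD⟩, fun ⟨β, hβ, h⟩ => (csInf_le' h).trans_lt hβ⟩
  · simp only [hZ, false_or]
    exact iff_of_false (by simp [Dim.ofOrdinal]) fun ⟨β, _, h⟩ => hD ⟨β, h⟩

theorem dimOf_lt_ofOrdinal_iff_eq_empty_or {s : Set Z} {α : Ordinal.{0}} :
    dimOf D ↥s < Dim.ofOrdinal α ↔ s = ∅ ∨ ∃ β : Iio α, D ↥s β := by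
  simp [dimOf_lt_ofOrdinal_iff]

end dimOf

/-- `D` is the transfinite inductive dimension defined by the partition scheme `𝒮`: every
`𝒜 ∈ 𝒮 Z` is the family of admissible open neighbourhoods for one separation problem on `Z`,
and `D Z α` says that every problem has an admissible `U` whose partition `Uᶜ` has
dimension `< α`. -/
structure IsPartitionDim (𝒮 : ∀ (Z : Type) [TopologicalSpace Z], Set (Set (Set Z)))
    (D : ∀ (Z : Type) [TopologicalSpace Z], Ordinal.{0} → Prop) : Prop where
  iff : ∀ (Z : Type) [TopologicalSpace Z] (α : Ordinal.{0}),
    D Z α ↔ ∀ 𝒜 ∈ 𝒮 Z, ∃ U ∈ 𝒜, dimOf D ↥Uᶜ < Dim.ofOrdinal α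
  isOpen_of_mem : ∀ {Z : Type} [TopologicalSpace Z], ∀ 𝒜 ∈ 𝒮 Z, ∀ U ∈ 𝒜, IsOpen U
  nonempty_of_isEmpty : ∀ {Z : Type} [TopologicalSpace Z] [IsEmpty Z], ∀ 𝒜 ∈ 𝒮 Z, 𝒜.Nonempty
  comap : ∀ {Z W : Type} [TopologicalSpace Z] [TopologicalSpace W] {φ : Z → W},
    IsClosedEmbedding φ → ∀ 𝒜 ∈ 𝒮 Z, ∃ ℬ ∈ 𝒮 W, ∀ V ∈ ℬ, φ ⁻¹' V ∈ 𝒜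
  glue : ∀ {Z ι : Type} [TopologicalSpace Z] {ρ : Z → ι}, IsLocallyConstant ρ →
    ∀ 𝒜 ∈ 𝒮 Z, ∃ ℬ : ∀ j, Set (Set ↥(ρ ⁻¹' {j})), (∀ j, ℬ j ∈ 𝒮 ↥(ρ ⁻¹' {j})) ∧
      ∀ V : ∀ j, Set ↥(ρ ⁻¹' {j}), (∀ j, V j ∈ ℬ j) → ⋃ j, ((↑) '' V j : Set Z) ∈ 𝒜

/-- Each problem on `X × Y` comes with slice problems on `Y` such that any choice of solutions
`W x` glues to a solution, as long as `W x` is used only over a suitable neighbourhood `O x`. -/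
def GluesAlongSlices (𝒮 : ∀ (Z : Type) [TopologicalSpace Z], Set (Set (Set Z)))
    (X : Type) [TopologicalSpace X] : Prop :=
  ∀ (Y : Type) [TopologicalSpace Y] [CompactSpace Y] [T2Space Y], ∀ 𝒜 ∈ 𝒮 (X × Y),
    ∃ ℬ : X → Set (Set Y), (∀ x, ℬ x ∈ 𝒮 Y) ∧ ∀ W : X → Set Y, (∀ x, W x ∈ ℬ x) →
      ∃ O : X → Set X, (∀ x, IsOpen (O x)) ∧ (∀ x, x ∈ O x) ∧
        ∀ ρ : X → X, IsLocallyConstant ρ → (∀ x, x ∈ O (ρ x)) →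
          {z : X × Y | z.2 ∈ W (ρ z.1)} ∈ 𝒜

namespace IsPartitionDim

variable {𝒮 : ∀ (Z : Type) [TopologicalSpace Z], Set (Set (Set Z))}
  {D : ∀ (Z : Type) [TopologicalSpace Z], Ordinal.{0} → Prop} (hD : IsPartitionDim 𝒮 D)
include hD

theorem of_isEmpty (Z : Type) [TopologicalSpace Z] [IsEmpty Z] (α : Ordinal.{0}) : D Z α := by
  refine (hD.iff Z α).2 fun 𝒜 h𝒜 => ?_
  obtain ⟨U, hU⟩ := hD.nonempty_of_isEmpty 𝒜 h𝒜
  exact ⟨U, hU, dimOf_lt_ofOrdinal_iff.2 (Or.inl inferInstance)⟩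

theorem mono {Z : Type} [TopologicalSpace Z] {α β : Ordinal.{0}} (h : D Z α) (hαβ : α ≤ β) :
    D Z β := by
  refine (hD.iff Z β).2 fun 𝒜 h𝒜 => ?_
  obtain ⟨U, hU, hlt⟩ := (hD.iff Z α).1 h 𝒜 h𝒜
  exact ⟨U, hU, hlt.trans_le (Dim.ofOrdinal_le_ofOrdinal.2 hαβ)⟩

theorem dimOf_le_ofOrdinal_iff {Z : Type} [TopologicalSpace Z] {α : Ordinal.{0}} :
    dimOf D Z ≤ Dim.ofOrdinal α ↔ D Z α := by
  unfold dimOf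
  split_ifs with hZ hα
  · exact iff_of_true (Dim.minusOne_lt_ofOrdinal α).le (hD.of_isEmpty Z α)
  · rw [Dim.ofOrdinal_le_ofOrdinal]
    exact ⟨fun h => hD.mono (csInf_mem hα) h, fun h => csInf_le' h⟩
  · exact iff_of_false (by simp [Dim.ofOrdinal]) fun h => hα ⟨α, h⟩

theorem dimOf_le_of_isClosedEmbedding {Z W : Type} [TopologicalSpace Z] [TopologicalSpace W]
    {φ : Z → W} (hφ : IsClosedEmbedding φ) : dimOf D Z ≤ dimOf D W := by
  suffices ∀ d : Dim, ∀ (Z W : Type) [TopologicalSpace Z] [TopologicalSpace W] (φ : Z → W),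
      IsClosedEmbedding φ → dimOf D W ≤ d → dimOf D Z ≤ d from this _ Z W φ hφ le_rfl
  intro d
  induction d using WellFoundedLT.induction with | _ d IH => ?_
  intro Z W _ _ φ hφ hW
  obtain rfl | rfl | ⟨α, rfl⟩ := d.cases
  · exact le_top
  · rw [dimOf_le_minusOne_iff] at hW ⊢
    exact φ.isEmpty
  · rw [hD.dimOf_le_ofOrdinal_iff, hD.iff] at hW ⊢
    intro 𝒜 h𝒜
    obtain ⟨ℬ, hℬ, hpull⟩ := hD.comap hφ 𝒜 h𝒜
    obtain ⟨V, hV, hlt⟩ := hW ℬ hℬ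
    refine ⟨φ ⁻¹' V, hpull V hV, ?_⟩
    exact (IH _ hlt _ _ _ (hφ.restrictPreimage Vᶜ) le_rfl).trans_lt hlt

theorem dimOf_le_of_range_subset {S T W : Type} [TopologicalSpace S] [TopologicalSpace T]
    [TopologicalSpace W] {e : S → W} {e' : T → W} (he : IsClosedEmbedding e)
    (he' : IsEmbedding e') (h : range e ⊆ range e') : dimOf D S ≤ dimOf D T := by
  choose ψ hψ using fun s => h ⟨s, rfl⟩
  have hcomp : e' ∘ ψ = e := funext hψ
  refine hD.dimOf_le_of_isClosedEmbedding (φ := ψ) ⟨(he'.of_comp_iff).1 (hcomp ▸ he.1), ?_⟩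
  have : range ψ = e' ⁻¹' range e := by
    ext t
    refine ⟨?_, fun ⟨s, hs⟩ => ⟨s, he'.injective ((hψ s).trans hs)⟩⟩
    rintro ⟨s, rfl⟩
    exact ⟨s, (hψ s).symm⟩
  exact this ▸ he.isClosed_range.preimage he'.continuous

theorem dimOf_le_sup_fiber {Z ι : Type} [TopologicalSpace Z] [Fintype ι] {ρ : Z → ι}
    (hρ : IsLocallyConstant ρ) :
    dimOf D Z ≤ Finset.univ.sup fun j => dimOf D ↥(ρ ⁻¹' {j}) := by
  suffices ∀ d : Dim, ∀ (Z : Type) [TopologicalSpace Z] (ρ : Z → ι), IsLocallyConstant ρ →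
      (∀ j, dimOf D ↥(ρ ⁻¹' {j}) ≤ d) → dimOf D Z ≤ d from
    this _ Z ρ hρ fun j =>
      Finset.le_sup (f := fun j => dimOf D ↥(ρ ⁻¹' {j})) (Finset.mem_univ j)
  intro d
  induction d using WellFoundedLT.induction with | _ d IH => ?_
  intro Z _ ρ hρ hfib
  obtain rfl | rfl | ⟨α, rfl⟩ := d.cases
  · exact le_top
  · simp only [dimOf_le_minusOne_iff] at hfib ⊢
    exact ⟨fun z => (hfib (ρ z)).false ⟨z, rfl⟩⟩
  · rw [hD.dimOf_le_ofOrdinal_iff, hD.iff]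
    intro 𝒜 h𝒜
    obtain ⟨ℬ, hℬ, hglue⟩ := hD.glue hρ 𝒜 h𝒜
    choose V hV hlt using fun j =>
      (hD.iff _ α).1 (hD.dimOf_le_ofOrdinal_iff.1 (hfib j)) _ (hℬ j)
    set U := ⋃ j, ((↑) '' V j : Set Z)
    have hU : IsOpen U := hD.isOpen_of_mem 𝒜 h𝒜 U (hglue V hV)
    refine ⟨U, hglue V hV, ?_⟩
    have hsup : (Finset.univ.sup fun j => dimOf D ↥(V j)ᶜ) < Dim.ofOrdinal α :=
      (Finset.sup_lt_iff (Dim.minusOne_lt_ofOrdinal α)).2 fun j _ => hlt j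
    refine (IH _ hsup ↥Uᶜ (ρ ∘ (↑)) (hρ.comp_continuous continuous_subtype_val)
      fun j => ?_).trans_lt hsup
    refine le_trans ?_ (Finset.le_sup (f := fun j => dimOf D ↥(V j)ᶜ) (Finset.mem_univ j))
    refine hD.dimOf_le_of_range_subset (e := ((↑) : ↥Uᶜ → Z) ∘ (↑))
      (e' := ((↑) : ↥(ρ ⁻¹' {j}) → Z) ∘ ((↑) : ↥(V j)ᶜ → ↥(ρ ⁻¹' {j})))
      (hU.isClosed_compl.isClosedEmbedding_subtypeVal.comp ((hρ.comp_continuous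
        continuous_subtype_val).isClosed_fiber j).isClosedEmbedding_subtypeVal)
      (IsEmbedding.subtypeVal.comp IsEmbedding.subtypeVal) ?_
    rintro _ ⟨⟨⟨z, hzU⟩, hzj⟩, rfl⟩
    obtain rfl : ρ z = j := hzj
    exact ⟨⟨⟨z, rfl⟩, fun h => hzU ((mem_iUnion_image_val_fiber rfl).2 h)⟩, rfl⟩

theorem dimOf_setOf_snd_mem_le {X Y ι : Type} [TopologicalSpace X] [TopologicalSpace Y]
    [Fintype ι] {ρ : X → ι} (hρ : IsLocallyConstant ρ) {P : ι → Set Y}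
    (hP : ∀ c, IsClosed (P c)) :
    dimOf D ↥{z : X × Y | z.2 ∈ P (ρ z.1)} ≤ Finset.univ.sup fun c => dimOf D (X × ↥(P c)) := by
  set S := {z : X × Y | z.2 ∈ P (ρ z.1)}
  have hS : IsClosed S := by
    rw [← isOpen_compl_iff]
    exact hρ.isOpen_setOf_snd_mem (W := fun c => (P c)ᶜ) fun c => (hP c).isOpen_compl
  have hρS : IsLocallyConstant fun s : S => ρ s.1.1 :=
    hρ.comp_continuous (continuous_fst.comp continuous_subtype_val)
  refine (hD.dimOf_le_sup_fiber hρS).trans (Finset.sup_mono_fun fun c _ => ?_)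
  refine hD.dimOf_le_of_range_subset (e := ((↑) : S → X × Y) ∘ (↑))
    (e' := Prod.map id ((↑) : P c → Y))
    (hS.isClosedEmbedding_subtypeVal.comp (hρS.isClosed_fiber c).isClosedEmbedding_subtypeVal)
    (IsEmbedding.id.prodMap IsEmbedding.subtypeVal) ?_
  rintro _ ⟨⟨⟨⟨x, y⟩, hy⟩, hc⟩, rfl⟩
  obtain rfl : ρ x = c := hc
  exact ⟨(x, ⟨y, hy⟩), rfl⟩

theorem dimOf_prod_le {X : Type} [TopologicalSpace X] [CompactSpace X]
    (hX : CovDimLE X 0) (hglue : GluesAlongSlices 𝒮 X)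
    (Y : Type) [TopologicalSpace Y] [CompactSpace Y] [T2Space Y] :
    dimOf D (X × Y) ≤ dimOf D Y := by
  suffices ∀ d : Dim, ∀ (Y : Type) [TopologicalSpace Y] [CompactSpace Y] [T2Space Y],
      dimOf D Y ≤ d → dimOf D (X × Y) ≤ d from this _ Y le_rfl
  intro d
  induction d using WellFoundedLT.induction with | _ d IH => ?_
  intro Y _ _ _ hY
  obtain rfl | rfl | ⟨α, rfl⟩ := d.cases
  · exact le_top
  · rw [dimOf_le_minusOne_iff] at hY ⊢
    infer_instance
  · rw [hD.dimOf_le_ofOrdinal_iff, hD.iff] at hY ⊢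
    intro 𝒜 h𝒜
    obtain ⟨ℬ, hℬ, hsl⟩ := hglue Y 𝒜 h𝒜
    choose W hWℬ hWlt using fun x => hY (ℬ x) (hℬ x)
    obtain ⟨O, hOo, hxO, hU⟩ := hsl W hWℬ
    obtain ⟨t, ρ, hρ, hρO⟩ := hX.exists_isLocallyConstant hOo hxO
    refine ⟨_, hU (fun x => ρ x) (hρ.comp _) hρO, ?_⟩
    have hlt : ∀ c : t, dimOf D (X × ↥(W c)ᶜ) < Dim.ofOrdinal α := fun c => by
      have : CompactSpace ↥(W c)ᶜ := isCompact_iff_compactSpace.1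
        (hD.isOpen_of_mem _ (hℬ c) _ (hWℬ c)).isClosed_compl.isCompact
      exact (IH _ (hWlt c) ↥(W c)ᶜ le_rfl).trans_lt (hWlt c)
    exact (hD.dimOf_setOf_snd_mem_le hρ (P := fun c => (W c)ᶜ)
      fun c => (hD.isOpen_of_mem _ (hℬ c) _ (hWℬ c)).isClosed_compl).trans_lt
      ((Finset.sup_lt_iff (Dim.minusOne_lt_ofOrdinal α)).2 fun c _ => hlt c)

theorem dimOf_prod_eq {X : Type} [TopologicalSpace X] [CompactSpace X] [T1Space X] [Nonempty X]
    (hX : CovDimLE X 0) (hglue : GluesAlongSlices 𝒮 X)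
    (Y : Type) [TopologicalSpace Y] [CompactSpace Y] [T2Space Y] :
    dimOf D (X × Y) = dimOf D Y :=
  (hD.dimOf_prod_le hX hglue Y).antisymm
    (hD.dimOf_le_of_isClosedEmbedding (isClosedEmbedding_prodMk_left (Classical.arbitrary X)))

end IsPartitionDim

section KInd

variable {m : ℕ} {K : Finset (Fin m) → Prop}

theorem IsKTuple.preimage {Z W : Type} {A : Fin m → Set W} (hA : IsKTuple K A) (φ : Z → W) :
    IsKTuple K fun i => φ ⁻¹' A i := fun I hI ⟨z, hz⟩ =>
  hA I hI ⟨φ z, mem_iInter₂.2 fun i hi => mem_iInter₂.1 hz i hi⟩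

theorem IsKTuple.image {Z W : Type} {A : Fin m → Set Z} (hA : IsKTuple K A) {φ : Z → W}
    (hφ : Function.Injective φ) : IsKTuple K fun i => φ '' A i := by
  rintro I ⟨i₀, hi₀⟩ ⟨w, hw⟩
  obtain ⟨z, -, rfl⟩ := mem_iInter₂.1 hw i₀ hi₀
  refine hA I ⟨i₀, hi₀⟩ ⟨z, mem_iInter₂.2 fun i hi => ?_⟩
  obtain ⟨z', hz', hzz'⟩ := mem_iInter₂.1 hw i hi
  exact hφ hzz' ▸ hz'

theorem KNbhd.comap {Z W : Type} [TopologicalSpace Z] [TopologicalSpace W] {F : Fin m → Set W}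
    {U : Fin m → Set W} (hU : KNbhd K F U) {φ : Z → W} (hφ : Continuous φ)
    {G : Fin m → Set Z} (hG : ∀ i, G i ⊆ φ ⁻¹' F i) : KNbhd K G fun i => φ ⁻¹' U i :=
  ⟨fun i => (hU.1 i).preimage hφ, hU.2.1.preimage φ,
    fun i => (hG i).trans (preimage_mono (hU.2.2 i))⟩

def kScheme (K : Finset (Fin m) → Prop) (Z : Type) [TopologicalSpace Z] : Set (Set (Set Z)) :=
  {𝒜 | ∃ F : Fin m → Set Z, (∀ i, IsClosed (F i)) ∧ IsKTuple K F ∧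
    𝒜 = (fun U => ⋃ i, U i) '' {U | KNbhd K F U}}

theorem kInd_eq_dimOf (Z : Type) [TopologicalSpace Z] : KInd K Z = dimOf (KIndLE K) Z := rfl

theorem kIndLE_iff (Z : Type) [TopologicalSpace Z] (α : Ordinal.{0}) :
    KIndLE K Z α ↔ ∀ F : Fin m → Set Z, (∀ i, IsClosed (F i)) → IsKTuple K F →
      ∃ U, KNbhd K F U ∧ KInd K ↥(⋃ i, U i)ᶜ < Dim.ofOrdinal α := by
  rw [KIndLE, KIndLeAux, WellFounded.fix_eq]
  refine forall₃_congr fun F _ _ => exists_congr fun U => ?_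
  rw [kInd_eq_dimOf, dimOf_lt_ofOrdinal_iff_eq_empty_or, KNbhd, and_assoc, and_assoc]
  exact Iff.rfl

theorem isPartitionDim_kIndLE : IsPartitionDim (kScheme K) (KIndLE K) where
  iff Z _ α := by
    rw [kIndLE_iff]
    constructor
    · rintro h 𝒜 ⟨F, hF, hT, rfl⟩
      obtain ⟨U, hU, hlt⟩ := h F hF hT
      exact ⟨_, ⟨U, hU, rfl⟩, hlt⟩
    · intro h F hF hT
      obtain ⟨_, ⟨U, hU, rfl⟩, hlt⟩ := h _ ⟨F, hF, hT, rfl⟩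
      exact ⟨U, hU, hlt⟩
  isOpen_of_mem := by
    rintro Z _ 𝒜 ⟨F, -, -, rfl⟩ _ ⟨U, hU, rfl⟩
    exact isOpen_iUnion hU.1
  nonempty_of_isEmpty := by
    rintro Z _ _ 𝒜 ⟨F, -, -, rfl⟩
    exact ⟨_, fun _ => ∅, ⟨fun _ => isOpen_empty, fun _ _ ⟨z, _⟩ => isEmptyElim z,
      fun _ z => isEmptyElim z⟩, rfl⟩
  comap := by
    rintro Z W _ _ φ hφ 𝒜 ⟨F, hF, hT, rfl⟩
    refine ⟨_, ⟨fun i => φ '' F i, fun i => hφ.isClosedMap _ (hF i), hT.image hφ.injective,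
      rfl⟩, ?_⟩
    rintro _ ⟨U, hU, rfl⟩
    exact ⟨_, hU.comap hφ.continuous fun i => subset_preimage_image φ (F i),
      preimage_iUnion.symm⟩
  glue := by
    rintro Z ι _ ρ hρ 𝒜 ⟨F, hF, hT, rfl⟩
    refine ⟨_, fun j => ⟨fun i => (↑) ⁻¹' F i, fun i => (hF i).preimage continuous_subtype_val,
      hT.preimage _, rfl⟩, fun V hV => ?_⟩
    choose U hU hUV using hV
    refine ⟨fun i => ⋃ j, (↑) '' U j i, ⟨fun i => isOpen_iUnion fun j =>
      (hρ.isOpen_fiber j).isOpenMap_subtype_val _ ((hU j).1 i), ?_, fun i z hz =>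
        (mem_iUnion_image_val_fiber rfl).2 ((hU (ρ z)).2.2 i hz)⟩, ?_⟩
    · rintro I hI ⟨z, hz⟩
      exact (hU (ρ z)).2.1 I hI ⟨⟨z, rfl⟩, mem_iInter₂.2 fun i hi =>
        (mem_iUnion_image_val_fiber rfl).1 (mem_iInter₂.1 hz i hi)⟩
    · simp only [← hUV, image_iUnion]
      exact iUnion_comm _

end KInd

section KProd

variable {m : ℕ} {K : Finset (Fin m) → Prop}

theorem isKTuple_setOf_snd_mem {X Y ι : Type} {ρ : X → ι} {V : ι → Fin m → Set Y}
    (hV : ∀ c, IsKTuple K (V c)) : IsKTuple K fun i => {z : X × Y | z.2 ∈ V (ρ z.1) i} :=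
  fun I hI ⟨z, hz⟩ => hV (ρ z.1) I hI ⟨z.2, mem_iInter₂.2 fun i hi => mem_iInter₂.1 hz i hi⟩

theorem KNbhd.exists_nhds_glue {X Y : Type} [TopologicalSpace X] [TopologicalSpace Y]
    [CompactSpace Y] {G : Fin m → Set (X × Y)} (hG : ∀ i, IsClosed (G i))
    {V : X → Fin m → Set Y} (hV : ∀ x, KNbhd K (fun i => Prod.mk x ⁻¹' G i) (V x)) :
    ∃ O : X → Set X, (∀ x, IsOpen (O x)) ∧ (∀ x, x ∈ O x) ∧
      ∀ ρ : X → X, IsLocallyConstant ρ → (∀ x, x ∈ O (ρ x)) →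
        KNbhd K G fun i => {z : X × Y | z.2 ∈ V (ρ z.1) i} := by
  refine ⟨fun x => {x' | ∀ y, (x', y) ∈ ⋂ i, (G i)ᶜ ∪ Prod.snd ⁻¹' V x i},
    fun x => isOpen_setOf_forall_prodMk_mem (isOpen_iInter_of_finite fun i =>
      (hG i).isOpen_compl.union (((hV x).1 i).preimage continuous_snd)),
    fun x y => mem_iInter.2 fun i =>
      or_iff_not_imp_left.2 fun h => (hV x).2.2 i (not_not.1 h),
    fun ρ hρ hρO => ⟨fun i => hρ.isOpen_setOf_snd_mem fun c => (hV c).1 i,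
      isKTuple_setOf_snd_mem fun c => (hV c).2.1, fun i z hz => ?_⟩⟩
  exact (mem_iInter.1 (hρO z.1 z.2) i).resolve_left (not_not.2 hz)

theorem gluesAlongSlices_kScheme (X : Type) [TopologicalSpace X] :
    GluesAlongSlices (kScheme K) X := by
  rintro Y _ _ _ 𝒜 ⟨G, hG, hT, rfl⟩
  refine ⟨_, fun x => ⟨_, fun i => (hG i).preimage (.prodMk_right x), hT.preimage _, rfl⟩,
    fun W hW => ?_⟩
  choose V hV hVW using hW
  obtain ⟨O, hOo, hxO, hU⟩ := KNbhd.exists_nhds_glue hG hV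
  refine ⟨O, hOo, hxO, fun ρ hρ hρO => ⟨_, hU ρ hρ hρO, ?_⟩⟩
  ext z
  simp [← hVW]

theorem kInd_prod_eq {X : Type} [TopologicalSpace X] [CompactSpace X] [T2Space X] [Nonempty X]
    (hX : CovDimLE X 0) (Y : Type) [TopologicalSpace Y] [CompactSpace Y] [T2Space Y] :
    KInd K (X × Y) = KInd K Y :=
  isPartitionDim_kIndLE.dimOf_prod_eq hX (gluesAlongSlices_kScheme X) Y

end KProd

section KStr

variable {m : ℕ} {K : Finset (Fin m) → Prop}

theorem mem_kObs_of_mem_kObs_preimage {Z W : Type} [TopologicalSpace Z] [TopologicalSpace W]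
    {φ : Z → W} (hφ : Continuous φ) {U : Fin m → Set W} {z : Z}
    (hz : z ∈ KObs K fun i => φ ⁻¹' U i) : φ z ∈ KObs K U := by
  rintro ⟨V, hV, hzV⟩
  exact hz ⟨_, hV.comap hφ fun i => subset_rfl, by simpa using hzV⟩

theorem kObs_setOf_snd_mem_eq_empty {X Y ι : Type} [TopologicalSpace X] [TopologicalSpace Y]
    {ρ : X → ι} (hρ : IsLocallyConstant ρ) {V : ι → Fin m → Set Y}
    (hVo : ∀ c i, IsOpen (V c i)) (hV : ∀ c, IsKTuple K (V c)) (hobs : ∀ c, KObs K (V c) = ∅) :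
    KObs K (fun i => {z : X × Y | z.2 ∈ V (ρ z.1) i}) = ∅ := by
  refine eq_empty_iff_forall_notMem.2 fun ⟨x, y⟩ hxy => ?_
  have hy : y ∉ KObs K (V (ρ x)) := hobs (ρ x) ▸ notMem_empty y
  obtain ⟨W, hW, hyW⟩ := not_not.1 hy
  refine hxy ⟨fun i => (ρ ⁻¹' {ρ x}) ×ˢ W i ∪ {z | z.2 ∈ V (ρ z.1) i},
    ⟨fun i => ((hρ.isOpen_fiber _).prod (hW.1 i)).union (hρ.isOpen_setOf_snd_mem (hVo · i)),
      ?_, fun i => subset_union_right⟩, ?_⟩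
  · rintro I hI ⟨z, hz⟩
    by_cases hzx : ρ z.1 = ρ x
    · refine hW.2.1 I hI ⟨z.2, mem_iInter₂.2 fun i hi => ?_⟩
      rcases mem_iInter₂.1 hz i hi with h | h
      · exact h.2
      · exact hW.2.2 i (hzx ▸ h)
    · exact hV (ρ z.1) I hI ⟨z.2, mem_iInter₂.2 fun i hi =>
        (mem_iInter₂.1 hz i hi).resolve_left fun h => hzx h.1⟩
  · obtain ⟨i, hi⟩ := mem_iUnion.1 hyW
    exact mem_iUnion.2 ⟨i, Or.inl ⟨rfl, hi⟩⟩

/-- The second half of `KStrongly K Z`, with `K-Ind Z` replaced by `d`. -/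
def HasObstructedKTuple (K : Finset (Fin m) → Prop) (Z : Type) [TopologicalSpace Z]
    (d : Dim) : Prop :=
  ∃ F : Fin m → Set Z, (∀ i, IsClosed (F i)) ∧ IsKTuple K F ∧
    ∀ U : Fin m → Set Z, KNbhd K F U → KInd K ↥(⋃ i, U i)ᶜ < d → KObs K U ≠ ∅

theorem HasObstructedKTuple.prod {Y : Type} [TopologicalSpace Y] {d : Dim}
    (h : HasObstructedKTuple K Y d) (X : Type) [TopologicalSpace X] [T1Space X] [Nonempty X] :
    HasObstructedKTuple K (X × Y) d := by
  obtain ⟨F, hF, hT, hobs⟩ := h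
  refine ⟨fun i => Prod.snd ⁻¹' F i, fun i => (hF i).preimage continuous_snd, hT.preimage _,
    fun U hU hlt => ?_⟩
  set x₀ := Classical.arbitrary X
  have hV : KNbhd K F fun i => Prod.mk x₀ ⁻¹' U i :=
    hU.comap (.prodMk_right x₀) fun i => subset_rfl
  have hle : KInd K ↥(⋃ i, Prod.mk x₀ ⁻¹' U i)ᶜ ≤ KInd K ↥(⋃ i, U i)ᶜ := by
    rw [← preimage_iUnion, ← preimage_compl]
    exact isPartitionDim_kIndLE.dimOf_le_of_isClosedEmbedding
      ((isClosedEmbedding_prodMk_left x₀).restrictPreimage _)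
  obtain ⟨y, hy⟩ := nonempty_iff_ne_empty.2 (hobs _ hV (hle.trans_lt hlt))
  exact (nonempty_of_mem (mem_kObs_of_mem_kObs_preimage (.prodMk_right x₀) hy)).ne_empty

theorem HasObstructedKTuple.of_prod {X Y : Type} [TopologicalSpace X] [TopologicalSpace Y]
    [CompactSpace X] [CompactSpace Y] [T2Space Y] (hX : CovDimLE X 0) {d : Dim}
    (hd : Dim.minusOne < d) (h : HasObstructedKTuple K (X × Y) d) :
    HasObstructedKTuple K Y d := by
  obtain ⟨G, hG, hT, hobs⟩ := h
  by_contra hY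
  simp only [HasObstructedKTuple, not_exists, not_and, not_forall, not_not] at hY
  choose V hV hVlt hVobs using fun x =>
    hY _ (fun i => (hG i).preimage (.prodMk_right x)) (hT.preimage (Prod.mk x))
  obtain ⟨O, hOo, hxO, hU⟩ := KNbhd.exists_nhds_glue hG hV
  obtain ⟨t, ρ, hρ, hρO⟩ := hX.exists_isLocallyConstant hOo hxO
  refine hobs _ (hU (fun x => ρ x) (hρ.comp _) hρO) ?_ (kObs_setOf_snd_mem_eq_empty
    (ρ := fun x => (ρ x : X)) (hρ.comp _) (fun c => (hV c).1) (fun c => (hV c).2.1) hVobs)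
  have hpart : (⋃ i, {z : X × Y | z.2 ∈ V (ρ z.1) i})ᶜ =
      {z | z.2 ∈ (fun c : t => (⋃ i, V c i)ᶜ) (ρ z.1)} := by
    ext
    simp
  change KInd K ↥(⋃ i, {z : X × Y | z.2 ∈ V (ρ z.1) i})ᶜ < d
  rw [hpart]
  refine (isPartitionDim_kIndLE.dimOf_setOf_snd_mem_le hρ
    fun c => (isOpen_iUnion (hV c).1).isClosed_compl).trans_lt
    ((Finset.sup_lt_iff hd).2 fun c _ => ?_)
  have : CompactSpace ↥(⋃ i, V c i)ᶜ :=
    isCompact_iff_compactSpace.1 (isOpen_iUnion (hV c).1).isClosed_compl.isCompact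
  exact (isPartitionDim_kIndLE.dimOf_prod_le hX (gluesAlongSlices_kScheme X) _).trans_lt (hVlt c)

theorem kStr_prod_eq {X : Type} [TopologicalSpace X] [CompactSpace X] [T2Space X] [Nonempty X]
    (hX : CovDimLE X 0) (Y : Type) [TopologicalSpace Y] [CompactSpace Y] [T2Space Y] :
    KStr K (X × Y) = KStr K Y := by
  have : KStrongly K (X × Y) ↔ KStrongly K Y := by
    change _ ∧ HasObstructedKTuple K _ _ ↔ _ ∧ HasObstructedKTuple K _ _
    rw [kInd_prod_eq hX Y]
    refine and_congr_right fun ⟨α, _, hα⟩ => ⟨fun h => h.of_prod hX ?_, fun h => h.prod X⟩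
    exact hα ▸ Dim.minusOne_lt_ofOrdinal α
  simp only [KStr, this]

end KStr

section LInd

variable {L : Type} [TopologicalSpace L]

def LNbhd {Z : Type} [TopologicalSpace Z] {F : Set Z} (f : C(F, L)) (U : Set Z) : Prop :=
  IsOpen U ∧ ∃ hFU : F ⊆ U, ∃ g : C(U, L), ∀ (x : Z) (hx : x ∈ F), g ⟨x, hFU hx⟩ = f ⟨x, hx⟩

def lScheme (L : Type) [TopologicalSpace L] (Z : Type) [TopologicalSpace Z] :
    Set (Set (Set Z)) :=
  {𝒜 | ∃ F : Set Z, IsClosed F ∧ ∃ f : C(F, L), 𝒜 = {U | LNbhd f U}}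

theorem lInd_eq_dimOf (Z : Type) [TopologicalSpace Z] : LInd L Z = dimOf (LIndLE L) Z := rfl

theorem lIndLE_iff (Z : Type) [TopologicalSpace Z] (α : Ordinal.{0}) :
    LIndLE L Z α ↔ ∀ F : Set Z, IsClosed F → ∀ f : C(F, L),
      ∃ U, LNbhd f U ∧ LInd L ↥Uᶜ < Dim.ofOrdinal α := by
  rw [LIndLE, LIndLeAux, WellFounded.fix_eq]
  refine forall₃_congr fun F _ f => exists_congr fun U => ?_
  rw [lInd_eq_dimOf, dimOf_lt_ofOrdinal_iff_eq_empty_or, LNbhd]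
  exact ⟨fun ⟨hU, hFU, hg, h⟩ => ⟨⟨hU, hFU, hg⟩, h⟩,
    fun ⟨⟨hU, hFU, hg⟩, h⟩ => ⟨hU, hFU, hg, h⟩⟩

theorem isPartitionDim_lIndLE : IsPartitionDim (lScheme L) (LIndLE L) where
  iff Z _ α := by
    rw [lIndLE_iff]
    constructor
    · rintro h 𝒜 ⟨F, hF, f, rfl⟩
      exact h F hF f
    · exact fun h F hF f => h _ ⟨F, hF, f, rfl⟩
  isOpen_of_mem := by
    rintro Z _ 𝒜 ⟨F, -, f, rfl⟩ U hU
    exact hU.1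
  nonempty_of_isEmpty := by
    rintro Z _ _ 𝒜 ⟨F, -, f, rfl⟩
    exact ⟨F, eq_empty_of_isEmpty F ▸ isOpen_empty, subset_rfl, f, fun _ _ => rfl⟩
  comap := by
    rintro Z W _ _ φ hφ 𝒜 ⟨F, hF, f, rfl⟩
    have hφF := hφ.comp hF.isClosedEmbedding_subtypeVal
    refine ⟨_, ⟨_, hφF.isClosed_range, f.comp hφF.toIsEmbedding.toHomeomorph.symm, rfl⟩, ?_⟩
    rintro V ⟨hVo, hFV, g, hg⟩
    refine ⟨hVo.preimage hφ.continuous, fun x hx => hFV ⟨⟨x, hx⟩, rfl⟩,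
      g.comp ⟨_, hφ.continuous.restrictPreimage⟩, fun x hx => ?_⟩
    exact (hg (φ x) ⟨⟨x, hx⟩, rfl⟩).trans
      (congrArg f (hφF.toIsEmbedding.toHomeomorph_symm_apply ⟨x, hx⟩))
  glue := by
    rintro Z ι _ ρ hρ 𝒜 ⟨F, hF, f, rfl⟩
    refine ⟨_, fun j => ⟨_, hF.preimage continuous_subtype_val,
      f.comp ⟨fun w => ⟨w.1.1, w.2⟩, by fun_prop⟩, rfl⟩, fun V hV => ?_⟩
    choose hVo hFV g hg using hV
    have hU := fun {z} {j} (hz : ρ z = j) => mem_iUnion_image_val_fiber (V := V) hz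
    obtain ⟨g', hg'⟩ := (hρ.comp_continuous continuous_subtype_val).exists_continuousMap_eq
      (Z := ↥(⋃ j, ((↑) '' V j : Set Z))) fun j =>
        (g j).comp ⟨fun u => ⟨⟨u.1.1, u.2⟩, (hU u.2).1 u.1.2⟩, by fun_prop⟩
    refine ⟨isOpen_iUnion fun j => (hρ.isOpen_fiber j).isOpenMap_subtype_val _ (hVo j),
      fun x hx => (hU rfl).2 (hFV (ρ x) hx), g', fun x hx => ?_⟩
    rw [hg']
    exact hg (ρ x) ⟨x, rfl⟩ hx

end LInd

section LProd

attribute [local instance] PiCountable.metricSpace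

theorem PiCountable.dist_add_smul_sub_le (a b : ℕ → ℝ) {t : ℝ} (h₀ : 0 ≤ t) (h₁ : t ≤ 1) :
    dist (a + t • (b - a)) b ≤ dist a b := by
  rw [PiCountable.dist_eq_tsum, PiCountable.dist_eq_tsum]
  refine Summable.tsum_le_tsum (fun n => min_le_min le_rfl ?_) (PiCountable.dist_summable _ _)
    (PiCountable.dist_summable _ _)
  simp only [Pi.add_apply, Pi.smul_apply, Pi.sub_apply, smul_eq_mul, Real.dist_eq]
  rw [show a n + t * (b n - a n) - b n = (1 - t) * (a n - b n) by ring, abs_mul,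
    abs_of_nonneg (by linarith)]
  exact mul_le_of_le_one_left (abs_nonneg _) (by linarith)

theorem IsANR.exists_retraction {L : Type} [MetricSpace L] [CompactSpace L] (hL : IsANR L) :
    ∃ (ι : C(L, ℕ → ℝ)) (O : Set (ℕ → ℝ)) (r : C(O, L)) (ε : ℝ), 0 < ε ∧
      (∀ l, Metric.ball (ι l) ε ⊆ O) ∧ ∀ l (hl : ι l ∈ O), r ⟨ι l, hl⟩ = l := by
  rcases isEmpty_or_nonempty L with _ | _
  · exact ⟨⟨isEmptyElim, continuous_of_discreteTopology⟩, ∅,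
      ⟨fun p => (notMem_empty _ p.2).elim, continuous_of_discreteTopology⟩, 1, one_pos,
      fun l => isEmptyElim l, fun l => isEmptyElim l⟩
  set u := TopologicalSpace.denseSeq L
  -- distances to a dense sequence separate points
  let ι : C(L, ℕ → ℝ) := ⟨fun l n => dist l (u n), by fun_prop⟩
  have hι : Function.Injective ι := by
    intro x y hxy
    refine dist_le_zero.1 (le_of_forall_pos_le_add fun δ hδ => ?_)
    obtain ⟨n, hn⟩ := Metric.denseRange_iff.1 (TopologicalSpace.denseRange_denseSeq L) x (δ / 2)
      (half_pos hδ)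
    have : dist y (u n) = dist x (u n) := (congrFun hxy n).symm
    linarith [dist_triangle_right x y (u n)]
  have hιc : IsClosedEmbedding ι := ι.continuous.isClosedEmbedding hι
  obtain ⟨O, hOo, hιO, r, hr⟩ := hL.2 (ℕ → ℝ) _ hιc.isClosed_range hιc.toHomeomorph.symm
  obtain ⟨ε, hε, hεO⟩ := (isCompact_range ι.continuous).exists_thickening_subset_open hOo hιO
  refine ⟨ι, O, r, ε, hε,
    fun l => (Metric.ball_subset_thickening (mem_range_self l) ε).trans hεO,
    fun l hl => (hr (ι l) (mem_range_self l)).trans ?_⟩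
  exact hιc.toHomeomorph.symm_apply_eq.2 rfl

theorem exists_continuousMap_eq_of_dist_lt {Z L : Type} [TopologicalSpace Z]
    [TopologicalSpace L] {ι : C(L, ℕ → ℝ)} {O : Set (ℕ → ℝ)} {r : C(O, L)} {ε : ℝ} (hε : 0 < ε)
    (hO : ∀ l, Metric.ball (ι l) ε ⊆ O) (hr : ∀ l (hl : ι l ∈ O), r ⟨ι l, hl⟩ = l)
    (a : C(Z, ℕ → ℝ)) (h : C(Z, L)) {A : Set Z}
    (hA : ∀ z ∈ A, dist (a z) (ι (h z)) < ε / 2) :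
    ∃ k : C(Z, L), ∀ z ∈ A, ∀ l, a z = ι l → k z = l := by
  -- interpolate from `a` (near `A`) to `ι ∘ h` (where `a` is `ε`-far from it)
  set φ : Z → ℝ := fun z => min 1 (max 0 (2 * dist (a z) (ι (h z)) / ε - 1))
  set V : Z → ℕ → ℝ := fun z => a z + φ z • (ι (h z) - a z)
  have hV : ∀ z, V z ∈ O := by
    intro z
    refine hO (h z) ?_
    rw [Metric.mem_ball]
    by_cases hz : dist (a z) (ι (h z)) < ε
    · exact (PiCountable.dist_add_smul_sub_le _ _ (le_min zero_le_one (le_max_left _ _))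
        (min_le_left _ _)).trans_lt hz
    · have : φ z = 1 := min_eq_left (le_max_of_le_right (by
        rw [le_sub_iff_add_le, le_div_iff₀ hε]; linarith [not_lt.1 hz]))
      simp [V, this, hε]
  refine ⟨⟨fun z => r ⟨V z, hV z⟩, r.continuous.comp (Continuous.subtype_mk (by fun_prop) _)⟩,
    fun z hz l hl => ?_⟩
  have : φ z = 0 := by
    refine le_antisymm (min_le_of_right_le (max_le le_rfl ?_))
      (le_min zero_le_one (le_max_left _ _))
    rw [sub_nonpos, div_le_one hε]
    linarith [hA z hz]
  have hVz : V z = ι l := by simp [V, this, hl]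
  exact (congrArg r (Subtype.ext hVz : (⟨V z, hV z⟩ : O) = ⟨ι l, hVz ▸ hV z⟩)).trans
    (hr l _)

theorem gluesAlongSlices_lScheme {L : Type} [MetricSpace L] [CompactSpace L] (hL : IsANR L)
    (X : Type) [TopologicalSpace X] [CompactSpace X] [T2Space X] :
    GluesAlongSlices (lScheme L) X := by
  obtain ⟨ι, O, r, ε, hε, hO, hr⟩ := hL.exists_retraction
  rintro Y _ _ _ 𝒜 ⟨F, hF, f, rfl⟩
  obtain ⟨a, ha⟩ := ContinuousMap.exists_restrict_eq hF (ι.comp f)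
  have ha' : ∀ z (hz : z ∈ F), a z = ι (f ⟨z, hz⟩) := fun z hz =>
    DFunLike.congr_fun ha ⟨z, hz⟩
  refine ⟨_, fun x => ⟨_, hF.preimage (.prodMk_right x),
    f.comp ⟨fun y => ⟨(x, y.1), y.2⟩, by fun_prop⟩, rfl⟩, fun W hW => ?_⟩
  choose hWo hFW g hg using hW
  -- where the extension `g x` of the slice map is still `ε/2`-close to the ambient extension `a`
  set G : X → Set (X × Y) := fun x =>
    {z | ∃ hz : z.2 ∈ W x, dist (a z) (ι (g x ⟨z.2, hz⟩)) < ε / 2}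
  have hGo : ∀ x, IsOpen (G x) := fun x => by
    have : G x = ((↑) : ↥(Prod.snd ⁻¹' W x) → X × Y) ''
        {w | dist (a w.1) (ι (g x ⟨w.1.2, w.2⟩)) < ε / 2} := by
      ext z
      exact ⟨fun ⟨hz, h⟩ => ⟨⟨z, hz⟩, h, rfl⟩, by rintro ⟨w, hw, rfl⟩; exact ⟨w.2, hw⟩⟩
    rw [this]
    exact ((hWo x).preimage continuous_snd).isOpenMap_subtype_val _
      (isOpen_lt (by fun_prop) continuous_const)
  refine ⟨fun x => {x' | ∀ y, (x', y) ∈ Fᶜ ∪ G x},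
    fun x => isOpen_setOf_forall_prodMk_mem (hF.isOpen_compl.union (hGo x)),
    fun x y => or_iff_not_imp_left.2 fun hxy => ?_, fun ρ hρ hρO => ?_⟩
  · have hxy : (x, y) ∈ F := not_not.1 hxy
    exact ⟨hFW x hxy, by simp [hg x y hxy, ha' _ hxy, half_pos hε]⟩
  have hFG : ∀ z ∈ F, z ∈ G (ρ z.1) := fun z hz =>
    (hρO z.1 z.2).resolve_left (not_not.2 hz)
  have hτ : IsLocallyConstant fun u : ↥{z : X × Y | z.2 ∈ W (ρ z.1)} => ρ u.1.1 :=
    hρ.comp_continuous (by fun_prop)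
  have hWc : ∀ c (u : ↥((fun u : ↥{z : X × Y | z.2 ∈ W (ρ z.1)} => ρ u.1.1) ⁻¹' {c})),
      u.1.1.2 ∈ W c := by
    rintro c ⟨⟨z, hz⟩, hc⟩
    exact (show ρ z.1 = c from hc) ▸ hz
  obtain ⟨h, hh⟩ := hτ.exists_continuousMap_eq fun c =>
    (g c).comp ⟨fun u => ⟨u.1.1.2, hWc c u⟩, by fun_prop⟩
  obtain ⟨k, hk⟩ := exists_continuousMap_eq_of_dist_lt hε hO hr
    (a.comp ⟨(↑), continuous_subtype_val⟩) h (A := {u | u.1 ∈ F}) fun u hu => by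
      obtain ⟨_, hlt⟩ := hFG u hu
      simpa [hh] using hlt
  exact ⟨hρ.isOpen_setOf_snd_mem hWo, fun z hz => (hFG z hz).1, k,
    fun z hz => hk _ hz _ (ha' z hz)⟩

end LProd

theorem lInd_prod_eq {L : Type} [MetricSpace L] [CompactSpace L] (hL : IsANR L) {X : Type}
    [TopologicalSpace X] [CompactSpace X] [T2Space X] [Nonempty X] (hX : CovDimLE X 0)
    (Y : Type) [TopologicalSpace Y] [CompactSpace Y] [T2Space Y] :
    LInd L (X × Y) = LInd L Y :=
  isPartitionDim_lIndLE.dimOf_prod_eq hX (gluesAlongSlices_lScheme hL X) Y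

theorem nonempty_and_covDimLE_zero {X : Type} [TopologicalSpace X]
    (h : covDim X = Dim.ofOrdinal 0) : Nonempty X ∧ CovDimLE X 0 := by
  unfold covDim at h
  split_ifs at h with hX hn
  · exact absurd h (Dim.minusOne_lt_ofOrdinal 0).ne
  · refine ⟨not_isEmpty_iff.1 hX, ?_⟩
    have h0 : sInf {n | CovDimLE X n} = 0 := by
      exact_mod_cast le_antisymm (Dim.ofOrdinal_le_ofOrdinal.1 h.le) zero_le
    exact (Nat.sInf_eq_zero.1 h0).resolve_right (nonempty_iff_ne_empty.1 hn)
  · exact absurd h (by simp [Dim.ofOrdinal])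

theorem statement9_general (m : ℕ) (K : Finset (Fin m) → Prop)
    (L : Type) [MetricSpace L] [CompactSpace L]
    (hANR : IsANR L)
    (X Y : Type) [TopologicalSpace X] [TopologicalSpace Y]
    [CompactSpace X] [CompactSpace Y] [T2Space X] [T2Space Y]
    (h : covDim X = Dim.ofOrdinal 0) :
    KInd K (X × Y) = KInd K Y ∧ KStr K (X × Y) = KStr K Y ∧
      LInd L (X × Y) = LInd L Y := by
  obtain ⟨_, hX⟩ := nonempty_and_covDimLE_zero h
  exact ⟨kInd_prod_eq hX Y, kStr_prod_eq hX Y, lInd_prod_eq hANR hX Y⟩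

theorem statement9 (m : ℕ) (K : Finset (Fin m) → Prop) (hK : IsComplex K)
    (L : Type) [MetricSpace L] [CompactSpace L]
    (hANR : IsANR L) (hL : ¬ContractibleSpace L)
    (X Y : Type) [TopologicalSpace X] [TopologicalSpace Y]
    [CompactSpace X] [CompactSpace Y] [T2Space X] [T2Space Y]
    (h : covDim X = Dim.ofOrdinal 0) :
    KInd K (X × Y) = KInd K Y ∧ KStr K (X × Y) = KStr K Y ∧
      LInd L (X × Y) = LInd L Y :=
  statement9_general m K L hANR X Y h

end
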